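/- arXiv:2005.05434 — 3 statements merged into one kernel-verified Lean document; each statement's English description precedes it below -/
import Mathlib

section
/- Let p, q be natural numbers with q ≥ 1, let λ ∈ (0,1), and define τ_ℓ = ∑_{i=1}^{ℓ−1} i^q and S(k) = ∑_{t=1}^{K} t^p where K = ∑_{ℓ=1}^{k} ℓ^q. Then there exists a constant C > 0 (depending only on p, q, λ) such that for every integer k ≥ 1, ∑_{ℓ=1}^{k} λ^ℓ · ( ∑_{t=1}^{ℓ−1} 1/(t^q λ^t) ) · ( ∑_{t=τ_ℓ}^{τ_ℓ+ℓ^q} t^p ) ≤ C · S(k) · k^{−q}. -/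
lemma nat_pow_succ_le (m n : ℕ) : (n+1)^(m+1) ≤ n^(m+1) + (m+1)*(n+1)^m := by
  induction m with
  | zero => simp
  | succ m ih =>
    have h1 : (n+1)^(m+2) = (n+1) * (n+1)^(m+1) := by ring
    have h2 : (n+1) * (n+1)^(m+1) ≤ (n+1) * (n^(m+1) + (m+1)*(n+1)^m) :=
      Nat.mul_le_mul_left _ ih
    have h3 : n^(m+1) ≤ (n+1)^(m+1) := Nat.pow_le_pow_left (by omega) _
    have h4 : (n+1) * (n^(m+1) + (m+1)*(n+1)^m)
        = n^(m+2) + n^(m+1) + (m+1)*(n+1)^(m+1) := by ring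
    calc (n+1)^(m+2) = (n+1) * (n+1)^(m+1) := h1
      _ ≤ n^(m+2) + n^(m+1) + (m+1)*(n+1)^(m+1) := by omega
      _ ≤ n^(m+2) + (m+2)*(n+1)^(m+1) := by nlinarith

lemma nat_pow_le_sum (m n : ℕ) : n^(m+1) ≤ (m+1) * ∑ t ∈ Finset.Icc 1 n, t^m := by
  induction n with
  | zero => simp
  | succ n ih =>
    rw [Finset.sum_Icc_succ_top (by omega : 1 ≤ n+1)]
    have := nat_pow_succ_le m n
    calc (n+1)^(m+1) ≤ n^(m+1) + (m+1)*(n+1)^m := this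
      _ ≤ (m+1) * ∑ t ∈ Finset.Icc 1 n, t^m + (m+1)*(n+1)^m := by omega
      _ = (m+1) * (∑ t ∈ Finset.Icc 1 n, t^m + (n+1)^m) := by ring

lemma summable_aux (q : ℕ) (lam : ℝ) (h0 : 0 < lam) (h1 : lam < 1) :
    Summable (fun j : ℕ => ((j:ℝ)+1)^q * lam^j) := by
  have h : Summable (fun n : ℕ => (n:ℝ)^q * lam^n) := by
    have := summable_pow_mul_geometric_of_norm_lt_one (R := ℝ) q
      (r := lam) (by rw [Real.norm_eq_abs, abs_lt]; constructor <;> linarith)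
    exact this
  have h2 : Summable (fun n : ℕ => ((n+1:ℕ):ℝ)^q * lam^(n+1)) :=
    (summable_nat_add_iff 1).2 h
  have h3 := h2.mul_left lam⁻¹
  refine h3.congr fun n => ?_
  push_cast
  rw [pow_succ]
  field_simp

lemma Abound (q : ℕ) (lam : ℝ) (h0 : 0 < lam) (h1 : lam < 1) (ℓ : ℕ) (hℓ : 1 ≤ ℓ) :
    (ℓ:ℝ)^q * (lam ^ ℓ * ∑ t ∈ Finset.Icc 1 (ℓ - 1), 1 / ((t : ℝ) ^ q * lam ^ t)) ≤
      ∑' j : ℕ, ((j:ℝ)+1)^q * lam^j := by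
  have hsum := summable_aux q lam h0 h1
  rw [Finset.mul_sum, Finset.mul_sum]
  have step1 : ∀ t ∈ Finset.Icc 1 (ℓ-1),
      (ℓ:ℝ)^q * (lam ^ ℓ * (1 / ((t : ℝ) ^ q * lam ^ t))) ≤
        (((ℓ - t : ℕ):ℝ)+1)^q * lam^(ℓ - t) := by
    intro t ht
    rw [Finset.mem_Icc] at ht
    have ht1 : 1 ≤ t := ht.1
    have htℓ : t ≤ ℓ := by omega
    have htpos : (0:ℝ) < (t:ℝ)^q := by positivity
    have hlpow : lam ^ ℓ = lam ^ (ℓ - t) * lam ^ t := by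
      rw [← pow_add]; congr 1; omega
    have hnat : ℓ ≤ t * (ℓ - t + 1) := by
      have h1 : ℓ - t ≤ t * (ℓ - t) := Nat.le_mul_of_pos_left _ (by omega)
      have h2 : t * (ℓ - t + 1) = t * (ℓ - t) + t := by ring
      omega
    have hkey : (ℓ:ℝ)^q ≤ (t:ℝ)^q * (((ℓ - t : ℕ):ℝ)+1)^q := by
      rw [← mul_pow]
      apply pow_le_pow_left₀ (by positivity)
      exact_mod_cast hnat
    have heq : (ℓ:ℝ)^q * (lam ^ ℓ * (1 / ((t : ℝ) ^ q * lam ^ t)))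
        = (ℓ:ℝ)^q / (t:ℝ)^q * lam^(ℓ - t) := by
      rw [hlpow]
      field_simp
    rw [heq]
    have hd : (ℓ:ℝ)^q / (t:ℝ)^q ≤ (((ℓ - t : ℕ):ℝ)+1)^q := by
      rw [div_le_iff₀ htpos]
      linarith [hkey]
    exact mul_le_mul_of_nonneg_right hd (by positivity)
  refine le_trans (Finset.sum_le_sum step1) ?_
  have hinj : ∀ x ∈ Finset.Icc 1 (ℓ-1), ∀ y ∈ Finset.Icc 1 (ℓ-1),
      ℓ - x = ℓ - y → x = y := by
    intro x hx y hy h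
    rw [Finset.mem_Icc] at hx hy
    omega
  calc ∑ i ∈ Finset.Icc 1 (ℓ-1), ((((ℓ - i : ℕ):ℝ)+1)^q * lam^(ℓ - i))
      = ∑ j ∈ (Finset.Icc 1 (ℓ-1)).image (fun t => ℓ - t), (((j:ℕ):ℝ)+1)^q * lam^j :=
        (Finset.sum_image (f := fun j : ℕ => ((j:ℝ)+1)^q * lam^j)
          (g := fun t => ℓ - t) hinj).symm
    _ ≤ ∑' j : ℕ, ((j:ℝ)+1)^q * lam^j :=
        Summable.sum_le_tsum _ (fun j _ => by positivity) hsum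



/-- Error term `e₅` of the first-order method: with `τ ℓ = ∑_{i=1}^{ℓ-1} i^q`,
`K = ∑_{ℓ=1}^{k} ℓ^q` and `S(k) = ∑_{t=1}^{K} t^p`, there exists `C > 0`
(depending only on `p, q, lam`) such that for all `k ≥ 1`,
`∑_{ℓ=1}^{k} lam^ℓ (∑_{t=1}^{ℓ-1} 1/(t^q lam^t)) (∑_{t=τ_ℓ}^{τ_ℓ+ℓ^q} t^p)
  ≤ C * S(k) * k^{-q}`. -/
theorem stmt12 (p q : ℕ) (hq : 1 ≤ q) (lam : ℝ) (hlam0 : 0 < lam) (hlam1 : lam < 1) :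
    ∃ C : ℝ, 0 < C ∧ ∀ k : ℕ, 1 ≤ k →
      ∑ ℓ ∈ Finset.Icc 1 k,
          lam ^ ℓ * (∑ t ∈ Finset.Icc 1 (ℓ - 1), 1 / ((t : ℝ) ^ q * lam ^ t)) *
            (∑ t ∈ Finset.Icc (∑ i ∈ Finset.Icc 1 (ℓ - 1), i ^ q)
                ((∑ i ∈ Finset.Icc 1 (ℓ - 1), i ^ q) + ℓ ^ q), (t : ℝ) ^ p) ≤
        C * (∑ t ∈ Finset.Icc 1 (∑ ℓ ∈ Finset.Icc 1 k, ℓ ^ q), (t : ℝ) ^ p) /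
          (k : ℝ) ^ q := by
  set M : ℝ := ∑' j : ℕ, ((j:ℝ)+1)^q * lam^j with hMdef
  have hsum := summable_aux q lam hlam0 hlam1
  have hM1 : (1:ℝ) ≤ M := by
    have := Summable.le_tsum hsum 0 (fun j _ => by positivity)
    simpa using this
  have hMpos : (0:ℝ) < M := lt_of_lt_of_le one_pos hM1
  set D : ℕ := (p+1) * (q+1)^(p+1) with hDdef
  have hDpos : 0 < D := by positivity
  refine ⟨2 * M * (D:ℝ), by positivity, ?_⟩
  intro k hk
  set K : ℕ := ∑ ℓ ∈ Finset.Icc 1 k, ℓ^q with hKdef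
  set S : ℝ := ∑ t ∈ Finset.Icc 1 K, (t:ℝ)^p with hSdef
  have hScast : S = ((∑ t ∈ Finset.Icc 1 K, t^p : ℕ) : ℝ) := by
    rw [hSdef]; push_cast; rfl
  -- nat inequality: k^((q+1)*(p+1)) ≤ D * SN
  have hDS : k^((q+1)*(p+1)) ≤ D * ∑ t ∈ Finset.Icc 1 K, t^p := by
    have h1 : k^(q+1) ≤ (q+1) * K := nat_pow_le_sum q k
    have h2 : K^(p+1) ≤ (p+1) * ∑ t ∈ Finset.Icc 1 K, t^p := nat_pow_le_sum p K
    calc k^((q+1)*(p+1)) = (k^(q+1))^(p+1) := by rw [pow_mul]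
      _ ≤ ((q+1)*K)^(p+1) := Nat.pow_le_pow_left h1 _
      _ = (q+1)^(p+1) * K^(p+1) := by rw [mul_pow]
      _ ≤ (q+1)^(p+1) * ((p+1) * ∑ t ∈ Finset.Icc 1 K, t^p) := Nat.mul_le_mul_left _ h2
      _ = D * ∑ t ∈ Finset.Icc 1 K, t^p := by rw [hDdef]; ring
  -- per-term bound
  have hterm : ∀ ℓ ∈ Finset.Icc 1 k,
      lam ^ ℓ * (∑ t ∈ Finset.Icc 1 (ℓ - 1), 1 / ((t : ℝ) ^ q * lam ^ t)) *
          (∑ t ∈ Finset.Icc (∑ i ∈ Finset.Icc 1 (ℓ - 1), i ^ q)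
              ((∑ i ∈ Finset.Icc 1 (ℓ - 1), i ^ q) + ℓ ^ q), (t : ℝ) ^ p) ≤
        2 * M * (k:ℝ)^((q+1)*p) := by
    intro ℓ hℓ
    rw [Finset.mem_Icc] at hℓ
    have hℓ1 : 1 ≤ ℓ := hℓ.1
    have hℓk : ℓ ≤ k := hℓ.2
    have hℓq : (0:ℝ) < (ℓ:ℝ)^q := by positivity
    have hA : lam ^ ℓ * (∑ t ∈ Finset.Icc 1 (ℓ - 1), 1 / ((t : ℝ) ^ q * lam ^ t)) ≤
        M / (ℓ:ℝ)^q := by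
      rw [le_div_iff₀ hℓq]
      have := Abound q lam hlam0 hlam1 ℓ hℓ1
      linarith [this]
    have hAnn : 0 ≤ lam ^ ℓ * (∑ t ∈ Finset.Icc 1 (ℓ - 1), 1 / ((t : ℝ) ^ q * lam ^ t)) := by
      apply mul_nonneg (by positivity)
      exact Finset.sum_nonneg fun t _ => by positivity
    -- bound on B
    have htop : (∑ i ∈ Finset.Icc 1 (ℓ - 1), i ^ q) + ℓ ^ q ≤ k^(q+1) := by
      have he : (∑ i ∈ Finset.Icc 1 (ℓ - 1), i ^ q) + ℓ ^ q = ∑ i ∈ Finset.Icc 1 ℓ, i^q := by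
        have hℓ' : ℓ - 1 + 1 = ℓ := by omega
        rw [← hℓ', Finset.sum_Icc_succ_top (by omega : 1 ≤ ℓ - 1 + 1)]
        norm_num
      rw [he]
      calc ∑ i ∈ Finset.Icc 1 ℓ, i^q ≤ (Finset.Icc 1 ℓ).card * ℓ^q := by
            apply Finset.sum_le_card_nsmul
            intro x hx
            rw [Finset.mem_Icc] at hx
            exact Nat.pow_le_pow_left hx.2 _
        _ = ℓ * ℓ^q := by rw [Nat.card_Icc]; norm_num
        _ = ℓ^(q+1) := by ring
        _ ≤ k^(q+1) := Nat.pow_le_pow_left hℓk _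
    have hB : (∑ t ∈ Finset.Icc (∑ i ∈ Finset.Icc 1 (ℓ - 1), i ^ q)
            ((∑ i ∈ Finset.Icc 1 (ℓ - 1), i ^ q) + ℓ ^ q), (t : ℝ) ^ p) ≤
        2 * (ℓ:ℝ)^q * (k:ℝ)^((q+1)*p) := by
      have hcard : (Finset.Icc (∑ i ∈ Finset.Icc 1 (ℓ - 1), i ^ q)
          ((∑ i ∈ Finset.Icc 1 (ℓ - 1), i ^ q) + ℓ ^ q)).card = ℓ^q + 1 := by
        rw [Nat.card_Icc]; omega
      calc (∑ t ∈ Finset.Icc (∑ i ∈ Finset.Icc 1 (ℓ - 1), i ^ q)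
              ((∑ i ∈ Finset.Icc 1 (ℓ - 1), i ^ q) + ℓ ^ q), (t : ℝ) ^ p)
          ≤ (Finset.Icc (∑ i ∈ Finset.Icc 1 (ℓ - 1), i ^ q)
              ((∑ i ∈ Finset.Icc 1 (ℓ - 1), i ^ q) + ℓ ^ q)).card • ((k:ℝ)^((q+1)*p)) := by
            apply Finset.sum_le_card_nsmul
            intro t ht
            rw [Finset.mem_Icc] at ht
            have htk : t ≤ k^(q+1) := le_trans ht.2 htop
            have : (t:ℝ) ≤ (k:ℝ)^(q+1) := by exact_mod_cast htk
            calc (t:ℝ)^p ≤ ((k:ℝ)^(q+1))^p :=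
                  pow_le_pow_left₀ (by positivity) this p
              _ = (k:ℝ)^((q+1)*p) := by rw [← pow_mul]
        _ = ((ℓ^q + 1 : ℕ):ℝ) * (k:ℝ)^((q+1)*p) := by
            rw [hcard, nsmul_eq_mul]
        _ ≤ 2 * (ℓ:ℝ)^q * (k:ℝ)^((q+1)*p) := by
            apply mul_le_mul_of_nonneg_right _ (by positivity)
            have h1 : 1 ≤ ℓ^q := Nat.one_le_pow _ _ (by omega)
            have : ((ℓ^q + 1 : ℕ):ℝ) ≤ 2 * ((ℓ^q : ℕ):ℝ) := by
              exact_mod_cast (by omega : ℓ^q + 1 ≤ 2 * ℓ^q)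
            push_cast at this ⊢
            linarith
    have hBnn : (0:ℝ) ≤ ∑ t ∈ Finset.Icc (∑ i ∈ Finset.Icc 1 (ℓ - 1), i ^ q)
        ((∑ i ∈ Finset.Icc 1 (ℓ - 1), i ^ q) + ℓ ^ q), (t : ℝ) ^ p :=
      Finset.sum_nonneg fun t _ => by positivity
    calc lam ^ ℓ * (∑ t ∈ Finset.Icc 1 (ℓ - 1), 1 / ((t : ℝ) ^ q * lam ^ t)) *
            (∑ t ∈ Finset.Icc (∑ i ∈ Finset.Icc 1 (ℓ - 1), i ^ q)
                ((∑ i ∈ Finset.Icc 1 (ℓ - 1), i ^ q) + ℓ ^ q), (t : ℝ) ^ p)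
        ≤ (M / (ℓ:ℝ)^q) * (2 * (ℓ:ℝ)^q * (k:ℝ)^((q+1)*p)) :=
          mul_le_mul hA hB hBnn (by positivity)
      _ = 2 * M * (k:ℝ)^((q+1)*p) := by
          field_simp
  have hkpos : (0:ℝ) < (k:ℝ) := by exact_mod_cast (by omega : 0 < k)
  have hkq : (0:ℝ) < (k:ℝ)^q := by positivity
  calc ∑ ℓ ∈ Finset.Icc 1 k,
        lam ^ ℓ * (∑ t ∈ Finset.Icc 1 (ℓ - 1), 1 / ((t : ℝ) ^ q * lam ^ t)) *
          (∑ t ∈ Finset.Icc (∑ i ∈ Finset.Icc 1 (ℓ - 1), i ^ q)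
              ((∑ i ∈ Finset.Icc 1 (ℓ - 1), i ^ q) + ℓ ^ q), (t : ℝ) ^ p)
      ≤ ∑ ℓ ∈ Finset.Icc 1 k, 2 * M * (k:ℝ)^((q+1)*p) := Finset.sum_le_sum hterm
    _ = (k:ℝ) * (2 * M * (k:ℝ)^((q+1)*p)) := by
        rw [Finset.sum_const, Nat.card_Icc, nsmul_eq_mul]
        norm_num
    _ ≤ 2 * M * (D:ℝ) * S / (k:ℝ)^q := by
        rw [le_div_iff₀ hkq]
        have heq : (k:ℝ) * (2 * M * (k:ℝ)^((q+1)*p)) * (k:ℝ)^q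
            = 2 * M * (k:ℝ)^((q+1)*(p+1)) := by
          rw [show (q+1)*(p+1) = (q+1)*p + 1 + q by ring, pow_add, pow_add]
          ring
        rw [heq]
        have hcast : (k:ℝ)^((q+1)*(p+1)) ≤ (D:ℝ) * S := by
          rw [hScast]
          exact_mod_cast hDS
        nlinarith [hMpos]
end

section
/- Let p, q be natural numbers with p ≥ 1 and q ≥ 1, let λ ∈ (0,1), and define S(k) = ∑_{t=1}^{K} t^p where K = ∑_{ℓ=1}^{k} ℓ^q. Then there exists a constant C > 0 (depending only on p, q, λ) such that for every integer k ≥ 1, ∑_{ℓ=1}^{k} ℓ^{p(q+1)} · λ^ℓ · ( ∑_{t=1}^{ℓ−1} 1/(t^q λ^t) ) ≤ C · S(k) · k^{−2q}. -/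
lemma sumPowLower (p : ℕ) (n : ℕ) (hn : 1 ≤ n) :
    ((n : ℝ) / 2) ^ (p + 1) ≤ ∑ t ∈ Finset.Icc 1 n, (t : ℝ) ^ p := by
  have hsub : Finset.Icc (n / 2 + 1) n ⊆ Finset.Icc 1 n := by
    apply Finset.Icc_subset_Icc_left; omega
  have h1 : ∑ t ∈ Finset.Icc (n / 2 + 1) n, (t : ℝ) ^ p ≤
      ∑ t ∈ Finset.Icc 1 n, (t : ℝ) ^ p := by
    apply Finset.sum_le_sum_of_subset_of_nonneg hsub
    intro t _ _; positivity
  have hcard : (Finset.Icc (n / 2 + 1) n).card = n - n / 2 := by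
    rw [Nat.card_Icc]; omega
  have h2 : (Finset.Icc (n / 2 + 1) n).card • (((n : ℝ) / 2) ^ p) ≤
      ∑ t ∈ Finset.Icc (n / 2 + 1) n, (t : ℝ) ^ p := by
    apply Finset.card_nsmul_le_sum
    intro t ht
    rw [Finset.mem_Icc] at ht
    apply pow_le_pow_left₀ (by positivity)
    have : n ≤ 2 * t := by omega
    have : (n : ℝ) ≤ 2 * t := by exact_mod_cast this
    linarith
  rw [hcard] at h2
  have hcount : (n : ℝ) / 2 ≤ ((n - n / 2 : ℕ) : ℝ) := by
    have : n ≤ 2 * (n - n / 2) := by omega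
    have : (n : ℝ) ≤ 2 * ((n - n / 2 : ℕ) : ℝ) := by exact_mod_cast this
    linarith
  calc ((n : ℝ) / 2) ^ (p + 1) = ((n : ℝ) / 2) * ((n : ℝ) / 2) ^ p := by ring
    _ ≤ ((n - n / 2 : ℕ) : ℝ) * ((n : ℝ) / 2) ^ p := by
        apply mul_le_mul_of_nonneg_right hcount (by positivity)
    _ ≤ ∑ t ∈ Finset.Icc (n / 2 + 1) n, (t : ℝ) ^ p := by
        rw [nsmul_eq_mul] at h2; exact h2
    _ ≤ _ := h1


lemma summAux (q : ℕ) (lam : ℝ) (h0 : 0 < lam) (h1 : lam < 1) :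
    Summable (fun j : ℕ => ((j : ℝ) + 1) ^ q * lam ^ j) := by
  have hn : ‖lam‖ < 1 := by rw [Real.norm_eq_abs, abs_of_pos h0]; exact h1
  have h := summable_pow_mul_geometric_of_norm_lt_one q hn (R := ℝ)
  have h2 : Summable (fun j : ℕ => ((j + 1 : ℕ) : ℝ) ^ q * lam ^ (j + 1)) :=
    (summable_nat_add_iff 1).mpr h
  have h3 := h2.mul_right lam⁻¹
  have : (fun j : ℕ => ((j + 1 : ℕ) : ℝ) ^ q * lam ^ (j + 1) * lam⁻¹) =
      fun j : ℕ => ((j : ℝ) + 1) ^ q * lam ^ j := by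
    funext j
    rw [pow_succ]
    push_cast
    field_simp
  rwa [this] at h3

lemma innerBound (q : ℕ) (lam : ℝ) (h0 : 0 < lam) (h1 : lam < 1) (m : ℕ) :
    ∑ t ∈ Finset.Icc 1 m, 1 / ((t : ℝ) ^ q * lam ^ t) ≤
      (∑' j : ℕ, ((j : ℝ) + 1) ^ q * lam ^ j) / ((m : ℝ) ^ q * lam ^ m) := by
  rcases Nat.eq_zero_or_pos m with hm | hm
  · subst hm
    simp
    apply div_nonneg
    · apply tsum_nonneg
      intro j
      positivity
    · positivity
  have hmpos : (0 : ℝ) < (m : ℝ) ^ q * lam ^ m := by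
    have : (0:ℝ) < (m:ℝ) := by exact_mod_cast hm
    positivity
  have key : ∀ t ∈ Finset.Icc 1 m, 1 / ((t : ℝ) ^ q * lam ^ t) ≤
      (((m - t : ℕ) : ℝ) + 1) ^ q * lam ^ (m - t) / ((m : ℝ) ^ q * lam ^ m) := by
    intro t ht
    rw [Finset.mem_Icc] at ht
    have htpos : (0 : ℝ) < (t : ℝ) ^ q * lam ^ t := by
      have : (0:ℝ) < (t:ℝ) := by exact_mod_cast ht.1
      positivity
    rw [div_le_div_iff₀ htpos hmpos, one_mul]
    have hsplit : lam ^ m = lam ^ (m - t) * lam ^ t := by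
      rw [← pow_add]; congr 1; omega
    rw [hsplit]
    have hnat : m ≤ (m - t + 1) * t := by nlinarith [ht.1, ht.2, Nat.sub_add_cancel ht.2]
    have hreal : (m : ℝ) ≤ (((m - t : ℕ) : ℝ) + 1) * t := by
      have h' : ((m : ℕ) : ℝ) ≤ (((m - t + 1) * t : ℕ) : ℝ) := by exact_mod_cast hnat
      push_cast at h' ⊢
      linarith
    have hpow : (m : ℝ) ^ q ≤ ((((m - t : ℕ) : ℝ) + 1) * t) ^ q := by
      apply pow_le_pow_left₀ (by positivity) hreal
    rw [mul_pow] at hpow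
    calc (m : ℝ) ^ q * (lam ^ (m - t) * lam ^ t)
        ≤ ((((m - t : ℕ) : ℝ) + 1) ^ q * (t:ℝ) ^ q) * (lam ^ (m - t) * lam ^ t) := by
          apply mul_le_mul_of_nonneg_right hpow (by positivity)
      _ = (((m - t : ℕ) : ℝ) + 1) ^ q * lam ^ (m - t) * ((t : ℝ) ^ q * lam ^ t) := by ring
  have hreindex : ∑ t ∈ Finset.Icc 1 m, (((m - t : ℕ) : ℝ) + 1) ^ q * lam ^ (m - t) =
      ∑ j ∈ Finset.range m, ((j : ℝ) + 1) ^ q * lam ^ j := by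
    rw [← Finset.Ico_add_one_right_eq_Icc, Finset.sum_Ico_eq_sum_range]
    have hrange : m + 1 - 1 = m := by omega
    rw [hrange]
    rw [← Finset.sum_range_reflect (fun j : ℕ => ((j : ℝ) + 1) ^ q * lam ^ j) m]
    apply Finset.sum_congr rfl
    intro i _
    have he : m - (1 + i) = m - 1 - i := by omega
    rw [he]
  have hle : ∑ t ∈ Finset.Icc 1 m, (((m - t : ℕ) : ℝ) + 1) ^ q * lam ^ (m - t) ≤
      ∑' j : ℕ, ((j : ℝ) + 1) ^ q * lam ^ j := by
    rw [hreindex]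
    exact Summable.sum_le_tsum _ (fun j _ => by positivity) (summAux q lam h0 h1)
  calc ∑ t ∈ Finset.Icc 1 m, 1 / ((t : ℝ) ^ q * lam ^ t)
      ≤ ∑ t ∈ Finset.Icc 1 m,
          (((m - t : ℕ) : ℝ) + 1) ^ q * lam ^ (m - t) / ((m : ℝ) ^ q * lam ^ m) :=
        Finset.sum_le_sum key
    _ = (∑ t ∈ Finset.Icc 1 m, (((m - t : ℕ) : ℝ) + 1) ^ q * lam ^ (m - t)) /
          ((m : ℝ) ^ q * lam ^ m) := by rw [Finset.sum_div]
    _ ≤ (∑' j : ℕ, ((j : ℝ) + 1) ^ q * lam ^ j) / ((m : ℝ) ^ q * lam ^ m) := by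
        gcongr

/-- Error term `e₃` of the first-order method: with `K = ∑_{ℓ=1}^{k} ℓ^q` and
`S(k) = ∑_{t=1}^{K} t^p`, there exists `C > 0` (depending only on `p, q, lam`)
such that for all `k ≥ 1`,
`∑_{ℓ=1}^{k} ℓ^{p(q+1)} lam^ℓ (∑_{t=1}^{ℓ-1} 1/(t^q lam^t)) ≤ C * S(k) * k^{-2q}`. -/
theorem stmt13 (p q : ℕ) (hp : 1 ≤ p) (hq : 1 ≤ q) (lam : ℝ)
    (hlam0 : 0 < lam) (hlam1 : lam < 1) :
    ∃ C : ℝ, 0 < C ∧ ∀ k : ℕ, 1 ≤ k →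
      ∑ ℓ ∈ Finset.Icc 1 k,
          (ℓ : ℝ) ^ (p * (q + 1)) * lam ^ ℓ *
            (∑ t ∈ Finset.Icc 1 (ℓ - 1), 1 / ((t : ℝ) ^ q * lam ^ t)) ≤
        C * (∑ t ∈ Finset.Icc 1 (∑ ℓ ∈ Finset.Icc 1 k, ℓ ^ q), (t : ℝ) ^ p) /
          (k : ℝ) ^ (2 * q) := by
  set C1 : ℝ := ∑' j : ℕ, ((j : ℝ) + 1) ^ q * lam ^ j with hC1def
  have hC1 : 1 ≤ C1 := by
    have h := Summable.le_tsum (summAux q lam hlam0 hlam1) 0 (fun j _ => by positivity)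
    simpa using h
  have hC1pos : 0 < C1 := lt_of_lt_of_le one_pos hC1
  have hqle : q ≤ p * (q + 1) := by
    calc q ≤ 1 * (q + 1) := by omega
      _ ≤ p * (q + 1) := Nat.mul_le_mul_right _ hp
  set e : ℕ := p * (q + 1) - q with hedef
  set C2 : ℝ := C1 * lam * 2 ^ q with hC2def
  have hC2pos : 0 < C2 := by positivity
  refine ⟨C2 * 2 ^ ((q + 2) * (p + 1)), by positivity, ?_⟩
  intro k hk
  set K : ℕ := ∑ ℓ ∈ Finset.Icc 1 k, ℓ ^ q with hKdef
  -- Step A: per-term bound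
  have stepA : ∀ ℓ ∈ Finset.Icc 1 k,
      (ℓ : ℝ) ^ (p * (q + 1)) * lam ^ ℓ *
        (∑ t ∈ Finset.Icc 1 (ℓ - 1), 1 / ((t : ℝ) ^ q * lam ^ t)) ≤
      C2 * (ℓ : ℝ) ^ e := by
    intro ℓ hℓ
    rw [Finset.mem_Icc] at hℓ
    rcases eq_or_lt_of_le hℓ.1 with h1 | h2
    · -- ℓ = 1 : inner sum is empty
      rw [← h1]
      norm_num
      positivity
    · -- ℓ ≥ 2
      set m : ℕ := ℓ - 1 with hmdef
      have hm1 : 1 ≤ m := by omega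
      have hmR : (1 : ℝ) ≤ (m : ℝ) := by exact_mod_cast hm1
      have hℓ2m : (ℓ : ℝ) ≤ 2 * (m : ℝ) := by
        have : ℓ ≤ 2 * m := by omega
        exact_mod_cast this
      have hinner := innerBound q lam hlam0 hlam1 m
      have hfac : (0:ℝ) ≤ (ℓ : ℝ) ^ (p * (q + 1)) * lam ^ ℓ := by positivity
      calc (ℓ : ℝ) ^ (p * (q + 1)) * lam ^ ℓ *
            (∑ t ∈ Finset.Icc 1 m, 1 / ((t : ℝ) ^ q * lam ^ t))
          ≤ (ℓ : ℝ) ^ (p * (q + 1)) * lam ^ ℓ * (C1 / ((m : ℝ) ^ q * lam ^ m)) :=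
            mul_le_mul_of_nonneg_left hinner hfac
        _ = C1 * lam * ((ℓ : ℝ) ^ q / (m : ℝ) ^ q) * (ℓ : ℝ) ^ e := by
            have hsplitpow : (ℓ : ℝ) ^ (p * (q + 1)) = (ℓ : ℝ) ^ e * (ℓ : ℝ) ^ q := by
              rw [← pow_add]; congr 1; omega
            have hℓeq : ℓ = m + 1 := by omega
            rw [hsplitpow, hℓeq, pow_succ]
            have hmne : ((m : ℝ) ^ q) ≠ 0 := by positivity
            have hlamne : (lam ^ m) ≠ 0 := by positivity
            field_simp
        _ ≤ C1 * lam * (2 : ℝ) ^ q * (ℓ : ℝ) ^ e := by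
            have hdiv : (ℓ : ℝ) ^ q / (m : ℝ) ^ q ≤ (2 : ℝ) ^ q := by
              rw [div_le_iff₀ (by positivity)]
              rw [← mul_pow]
              exact pow_le_pow_left₀ (by positivity) hℓ2m q
            gcongr
  -- Step B: sum the bound
  have stepB : ∑ ℓ ∈ Finset.Icc 1 k,
      (ℓ : ℝ) ^ (p * (q + 1)) * lam ^ ℓ *
        (∑ t ∈ Finset.Icc 1 (ℓ - 1), 1 / ((t : ℝ) ^ q * lam ^ t)) ≤
      C2 * ((k : ℝ) ^ (e + 1)) := by
    calc ∑ ℓ ∈ Finset.Icc 1 k, (ℓ : ℝ) ^ (p * (q + 1)) * lam ^ ℓ *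
          (∑ t ∈ Finset.Icc 1 (ℓ - 1), 1 / ((t : ℝ) ^ q * lam ^ t))
        ≤ ∑ ℓ ∈ Finset.Icc 1 k, C2 * (ℓ : ℝ) ^ e := Finset.sum_le_sum stepA
      _ ≤ ∑ ℓ ∈ Finset.Icc 1 k, C2 * (k : ℝ) ^ e := by
          apply Finset.sum_le_sum
          intro ℓ hℓ
          rw [Finset.mem_Icc] at hℓ
          have : (ℓ : ℝ) ≤ (k : ℝ) := by exact_mod_cast hℓ.2
          gcongr
      _ = (k : ℕ) * (C2 * (k : ℝ) ^ e) := by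
          rw [Finset.sum_const, Nat.card_Icc]
          simp [nsmul_eq_mul]
      _ = C2 * ((k : ℝ) ^ (e + 1)) := by rw [pow_succ]; ring
  -- Step C : lower bound for S
  have hKcast : (((k : ℝ)) / 2) ^ (q + 1) ≤ (K : ℝ) := by
    have h := sumPowLower q k hk
    have : (K : ℝ) = ∑ ℓ ∈ Finset.Icc 1 k, (ℓ : ℝ) ^ q := by
      rw [hKdef]; push_cast; ring
    rw [this]; exact h
  have hK1 : 1 ≤ K := by
    by_contra h
    push_neg at h
    interval_cases K
    have hkR : (1:ℝ) ≤ (k:ℝ) := by exact_mod_cast hk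
    have : (0:ℝ) < ((k:ℝ)/2)^(q+1) := by positivity
    simp at hKcast
    linarith
  have hS := sumPowLower p K hK1
  have hkpow : (0 : ℝ) < (k : ℝ) ^ (2 * q) := by
    have : (0:ℝ) < (k:ℝ) := by exact_mod_cast hk
    positivity
  rw [le_div_iff₀ hkpow]
  have hexp : e + 1 + 2 * q = (q + 1) * (p + 1) := by
    have h' : (q + 1) * (p + 1) = p * (q + 1) + q + 1 := by ring
    omega
  have h1 : ((k : ℝ) / 2) ^ (q + 1) / 2 ≤ (K : ℝ) / 2 := by linarith
  have h2 : (((k : ℝ) / 2) ^ (q + 1) / 2) ^ (p + 1) ≤ ((K : ℝ) / 2) ^ (p + 1) :=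
    pow_le_pow_left₀ (by positivity) h1 _
  have h3 : (((k : ℝ) / 2) ^ (q + 1) / 2) ^ (p + 1) =
      (k : ℝ) ^ ((q + 1) * (p + 1)) / 2 ^ ((q + 2) * (p + 1)) := by
    rw [div_pow, div_pow, div_pow, div_div, ← pow_mul, ← pow_mul, ← pow_add]
    congr 1
    ring
  have h4 : (k : ℝ) ^ ((q + 1) * (p + 1)) ≤
      2 ^ ((q + 2) * (p + 1)) * ∑ t ∈ Finset.Icc 1 K, (t : ℝ) ^ p := by
    have h5 : (k : ℝ) ^ ((q + 1) * (p + 1)) / 2 ^ ((q + 2) * (p + 1)) ≤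
        ∑ t ∈ Finset.Icc 1 K, (t : ℝ) ^ p := by
      rw [← h3]; exact le_trans h2 hS
    rw [div_le_iff₀ (by positivity)] at h5
    linarith
  calc (∑ ℓ ∈ Finset.Icc 1 k, (ℓ : ℝ) ^ (p * (q + 1)) * lam ^ ℓ *
          (∑ t ∈ Finset.Icc 1 (ℓ - 1), 1 / ((t : ℝ) ^ q * lam ^ t))) * (k : ℝ) ^ (2 * q)
      ≤ C2 * (k : ℝ) ^ (e + 1) * (k : ℝ) ^ (2 * q) :=
        mul_le_mul_of_nonneg_right stepB hkpow.le
    _ = C2 * (k : ℝ) ^ ((q + 1) * (p + 1)) := by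
        rw [mul_assoc, ← pow_add, hexp]
    _ ≤ C2 * (2 ^ ((q + 2) * (p + 1)) * ∑ t ∈ Finset.Icc 1 K, (t : ℝ) ^ p) :=
        mul_le_mul_of_nonneg_left h4 hC2pos.le
    _ = C2 * 2 ^ ((q + 2) * (p + 1)) * ∑ t ∈ Finset.Icc 1 K, (t : ℝ) ^ p := by ring
end

section
/- Let S, A be positive integers, λ ∈ [0,1), c ∈ ℝ^{S×A}, and for each state s let P_s ⊆ (Δ(S))^A be a nonempty compact set. Define the robust Bellman operator F : ℝ^S → ℝ^S by F(v)_s = min_{x ∈ Δ(A)} max_{y ∈ P_s} ∑_{a=1}^{A} x_a ( c_{sa} + λ ⟨y_a, v⟩ ). Then F is a contraction with factor λ with respect to the sup norm: for all v, w ∈ ℝ^S, ‖F(v) − F(w)‖_∞ ≤ λ ‖v − w‖_∞. -/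
/-- The robust Bellman operator for s-rectangular uncertainty sets:
`(robustBellman S A c lam P v) s = min_{x ∈ Δ(A)} max_{y ∈ P s} ∑ a, x a * (c s a + lam ⟨y a, v⟩)`. -/
noncomputable def robustBellman (S A : ℕ) (c : Fin S → Fin A → ℝ) (lam : ℝ)
    (P : Fin S → Set (Fin A → Fin S → ℝ)) (v : Fin S → ℝ) : Fin S → ℝ :=
  fun s => sInf ((fun x : Fin A → ℝ =>
      sSup ((fun y : Fin A → Fin S → ℝ =>
        ∑ a, x a * (c s a + lam * ∑ s', y a s' * v s')) '' P s)) '' stdSimplex ℝ (Fin A))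

/-- A simplex-weighted average of values bounded in absolute value by `B` is bounded by `B`. -/
lemma simplex_avg_abs_le {n : ℕ} (x : Fin n → ℝ) (hx : x ∈ stdSimplex ℝ (Fin n))
    (t : Fin n → ℝ) (B : ℝ) (hB : ∀ a, |t a| ≤ B) : |∑ a, x a * t a| ≤ B := by
  calc |∑ a, x a * t a| ≤ ∑ a, |x a * t a| := Finset.abs_sum_le_sum_abs _ _
    _ = ∑ a, x a * |t a| := by
        refine Finset.sum_congr rfl fun a _ => ?_
        rw [abs_mul, abs_of_nonneg (hx.1 a)]
    _ ≤ ∑ a, x a * B := Finset.sum_le_sum fun a _ =>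
        mul_le_mul_of_nonneg_left (hB a) (hx.1 a)
    _ = B := by rw [← Finset.sum_mul, hx.2, one_mul]

lemma simplex_dot_abs_le {n : ℕ} (y : Fin n → ℝ) (hy : y ∈ stdSimplex ℝ (Fin n))
    (u : Fin n → ℝ) : |∑ s', y s' * u s'| ≤ ‖u‖ := by
  refine simplex_avg_abs_le y hy u ‖u‖ fun s' => ?_
  simpa using norm_le_pi_norm u s'

lemma abs_sInf_sub_sInf_le (Sv Sw : Set ℝ) (hv : Sv.Nonempty) (hw : Sw.Nonempty)
    (hbv : BddBelow Sv) (hbw : BddBelow Sw) (ε : ℝ)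
    (h1 : ∀ b ∈ Sw, ∃ a ∈ Sv, a ≤ b + ε) (h2 : ∀ a ∈ Sv, ∃ b ∈ Sw, b ≤ a + ε) :
    |sInf Sv - sInf Sw| ≤ ε := by
  rw [abs_sub_le_iff]
  have k1 : sInf Sv - ε ≤ sInf Sw := by
    refine le_csInf hw fun b hb => ?_
    obtain ⟨a, ha, hab⟩ := h1 b hb
    linarith [csInf_le hbv ha]
  have k2 : sInf Sw - ε ≤ sInf Sv := by
    refine le_csInf hv fun a ha => ?_
    obtain ⟨b, hb, hba⟩ := h2 a ha
    linarith [csInf_le hbw hb]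
  constructor <;> linarith

lemma abs_sSup_sub_sSup_le (Sv Sw : Set ℝ) (hv : Sv.Nonempty) (hw : Sw.Nonempty)
    (hbv : BddAbove Sv) (hbw : BddAbove Sw) (ε : ℝ)
    (h1 : ∀ a ∈ Sv, ∃ b ∈ Sw, a ≤ b + ε) (h2 : ∀ b ∈ Sw, ∃ a ∈ Sv, b ≤ a + ε) :
    |sSup Sv - sSup Sw| ≤ ε := by
  rw [abs_sub_le_iff]
  constructor
  · rw [sub_le_iff_le_add, add_comm]
    refine csSup_le hv fun a ha => ?_
    obtain ⟨b, hb, hab⟩ := h1 a ha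
    linarith [le_csSup hbw hb]
  · rw [sub_le_iff_le_add, add_comm]
    refine csSup_le hw fun b hb => ?_
    obtain ⟨a, ha, hba⟩ := h2 b hb
    linarith [le_csSup hbv ha]

/-- The robust Bellman operator is a sup-norm contraction with factor `lam`:
`‖F v - F w‖_∞ ≤ lam * ‖v - w‖_∞` (the norm on `Fin S → ℝ` is the sup norm). -/
theorem stmt17 (S A : ℕ) (hS : 0 < S) (hA : 0 < A)
    (lam : ℝ) (hlam0 : 0 ≤ lam) (hlam1 : lam < 1)
    (c : Fin S → Fin A → ℝ)
    (P : Fin S → Set (Fin A → Fin S → ℝ))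
    (hPsub : ∀ s, P s ⊆ {y | ∀ a, y a ∈ stdSimplex ℝ (Fin S)})
    (hne : ∀ s, (P s).Nonempty) (hcomp : ∀ s, IsCompact (P s)) :
    ∀ v w : Fin S → ℝ,
      ‖robustBellman S A c lam P v - robustBellman S A c lam P w‖ ≤ lam * ‖v - w‖ := by
  intro v w
  have hA' : Nonempty (Fin A) := ⟨⟨0, hA⟩⟩
  set ε := lam * ‖v - w‖ with hε
  have hε0 : 0 ≤ ε := mul_nonneg hlam0 (norm_nonneg _)
  -- per-state bound on the inner sum
  have termbd : ∀ (u : Fin S → ℝ) (s : Fin S) (x : Fin A → ℝ), x ∈ stdSimplex ℝ (Fin A) →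
      ∀ y ∈ P s, |∑ a, x a * (c s a + lam * ∑ s', y a s' * u s')| ≤
        (Finset.univ.sup' (Finset.univ_nonempty) fun a => |c s a|) + lam * ‖u‖ := by
    intro u s x hx y hy
    refine simplex_avg_abs_le x hx _ _ fun a => ?_
    calc |c s a + lam * ∑ s', y a s' * u s'| ≤ |c s a| + |lam * ∑ s', y a s' * u s'| :=
          abs_add_le _ _
      _ ≤ (Finset.univ.sup' Finset.univ_nonempty fun a => |c s a|) + lam * ‖u‖ := by
          gcongr
          · exact Finset.le_sup' (fun a => |c s a|) (Finset.mem_univ a)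
          · rw [abs_mul, abs_of_nonneg hlam0]
            exact mul_le_mul_of_nonneg_left (simplex_dot_abs_le _ (hPsub s hy a) u) hlam0
  -- difference bound
  have diffbd : ∀ (s : Fin S) (x : Fin A → ℝ), x ∈ stdSimplex ℝ (Fin A) →
      ∀ y ∈ P s,
      |(∑ a, x a * (c s a + lam * ∑ s', y a s' * v s')) -
       (∑ a, x a * (c s a + lam * ∑ s', y a s' * w s'))| ≤ ε := by
    intro s x hx y hy
    have heq : (∑ a, x a * (c s a + lam * ∑ s', y a s' * v s')) -
       (∑ a, x a * (c s a + lam * ∑ s', y a s' * w s')) =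
       ∑ a, x a * (lam * ∑ s', y a s' * (v - w) s') := by
      rw [← Finset.sum_sub_distrib]
      refine Finset.sum_congr rfl fun a _ => ?_
      have : ∑ s', y a s' * (v - w) s' =
          (∑ s', y a s' * v s') - (∑ s', y a s' * w s') := by
        simp [Pi.sub_apply, mul_sub, Finset.sum_sub_distrib]
      rw [this]; ring
    rw [heq]
    refine simplex_avg_abs_le x hx _ _ fun a => ?_
    rw [abs_mul, abs_of_nonneg hlam0]
    exact mul_le_mul_of_nonneg_left (simplex_dot_abs_le _ (hPsub s hy a) (v - w)) hlam0
  -- per-state contraction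
  have key : ∀ s : Fin S,
      |robustBellman S A c lam P v s - robustBellman S A c lam P w s| ≤ ε := by
    intro s
    set g := fun (u : Fin S → ℝ) (x : Fin A → ℝ) =>
      sSup ((fun y : Fin A → Fin S → ℝ =>
        ∑ a, x a * (c s a + lam * ∑ s', y a s' * u s')) '' P s) with hg
    have hBdd : ∀ (u : Fin S → ℝ) (x : Fin A → ℝ), x ∈ stdSimplex ℝ (Fin A) →
        BddAbove ((fun y : Fin A → Fin S → ℝ =>
          ∑ a, x a * (c s a + lam * ∑ s', y a s' * u s')) '' P s) := by
      intro u x hx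
      refine ⟨(Finset.univ.sup' Finset.univ_nonempty fun a => |c s a|) + lam * ‖u‖, ?_⟩
      rintro _ ⟨y, hy, rfl⟩
      exact (abs_le.mp (termbd u s x hx y hy)).2
    have hImne : ∀ (u : Fin S → ℝ) (x : Fin A → ℝ),
        ((fun y : Fin A → Fin S → ℝ =>
          ∑ a, x a * (c s a + lam * ∑ s', y a s' * u s')) '' P s).Nonempty :=
      fun u x => (hne s).image _
    -- inner bound: |g v x - g w x| ≤ ε for x in simplex
    have inner : ∀ x ∈ stdSimplex ℝ (Fin A), |g v x - g w x| ≤ ε := by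
      intro x hx
      refine abs_sSup_sub_sSup_le _ _ (hImne v x) (hImne w x) (hBdd v x hx) (hBdd w x hx) ε
        ?_ ?_
      · rintro _ ⟨y, hy, rfl⟩
        exact ⟨_, ⟨y, hy, rfl⟩, by linarith [(abs_le.mp (diffbd s x hx y hy)).2]⟩
      · rintro _ ⟨y, hy, rfl⟩
        exact ⟨_, ⟨y, hy, rfl⟩, by linarith [(abs_le.mp (diffbd s x hx y hy)).1]⟩
    -- g u x is bounded below uniformly
    have glb : ∀ (u : Fin S → ℝ) (x : Fin A → ℝ), x ∈ stdSimplex ℝ (Fin A) →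
        -((Finset.univ.sup' Finset.univ_nonempty fun a => |c s a|) + lam * ‖u‖) ≤ g u x := by
      intro u x hx
      obtain ⟨y, hy⟩ := hne s
      calc -((Finset.univ.sup' Finset.univ_nonempty fun a => |c s a|) + lam * ‖u‖)
          ≤ ∑ a, x a * (c s a + lam * ∑ s', y a s' * u s') :=
            (abs_le.mp (termbd u s x hx y hy)).1
        _ ≤ g u x := le_csSup (hBdd u x hx) ⟨y, hy, rfl⟩
    have hsne : (stdSimplex ℝ (Fin A)).Nonempty := ⟨_, ite_eq_mem_stdSimplex ℝ ⟨0, hA⟩⟩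
    have hFve : robustBellman S A c lam P v s = sInf (g v '' stdSimplex ℝ (Fin A)) := rfl
    have hFwe : robustBellman S A c lam P w s = sInf (g w '' stdSimplex ℝ (Fin A)) := rfl
    rw [hFve, hFwe]
    refine abs_sInf_sub_sInf_le _ _ (hsne.image _) (hsne.image _) ?_ ?_ ε ?_ ?_
    · exact ⟨_, by rintro _ ⟨x, hx, rfl⟩; exact glb v x hx⟩
    · exact ⟨_, by rintro _ ⟨x, hx, rfl⟩; exact glb w x hx⟩
    · rintro _ ⟨x, hx, rfl⟩
      exact ⟨g v x, ⟨x, hx, rfl⟩, by linarith [(abs_le.mp (inner x hx)).2]⟩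
    · rintro _ ⟨x, hx, rfl⟩
      exact ⟨g w x, ⟨x, hx, rfl⟩, by linarith [(abs_le.mp (inner x hx)).1]⟩
  refine (pi_norm_le_iff_of_nonneg hε0).mpr fun s => ?_
  simpa using key s
end
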